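/- Let 𝒮 = ℕ^{<ℕ} be the set of finite sequences of natural numbers, and for s ∈ 𝒮 let |s| be its length and write t ⪯ s if s extends t. Let T ⊆ 𝒮 be a tree (downward closed under ⪯). In ℓ¹(𝒮), define a_s = ∑_{t ⪯ s} 2^{-|t|} δ_t and b_s = 2^{-|s|} δ_s. Let W_T ⊆ ℓ¹(𝒮) ⊕ ℓ¹(𝒮) be the closed linear span of { a_s ⊕ b_s : s ∈ T }. Then every element ξ ⊕ η ∈ W_T satisfies: ξ(t) = 0 = η(t) for all t ∈ 𝒮 \ T, and ξ(t) = η(t) + 2 ∑_{k∈ℕ} ξ(t⌢k) for all t ∈ 𝒮, where t⌢k denotes t with k appended. -/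

import Mathlib

/-
Both conclusions say that certain continuous linear functionals on `ℓ¹ ⊕ ℓ¹` vanish on `W_T`:
evaluation at `t` (for `t ∉ T`), and `ξ ⊕ η ↦ ξ(t) - η(t) - 2 ∑ₖ ξ(t⌢k)`, which is continuous
because `ξ ↦ ∑ₖ ξ(t⌢k)` has norm at most one. So it suffices to check them on the generators
`a_s ⊕ b_s`, `s ∈ T`; the first holds since `T` is downward closed. For the recursion,
`a_s(t) = 2^{-|t|}` exactly when `t ⪯ s`. If `t` is a proper prefix of `s`, exactly one child
`t⌢k` is a prefix of `s`, and `2^{-|t|} = 0 + 2 · 2^{-|t|-1}`; otherwise no child is, and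
`a_s(t) = b_s(t)` (both are `2^{-|s|}` if `t = s`, and `0` if `t ⋠ s`).
-/

/-- `δ_t ∈ ℓ¹(ℕ^{<ℕ})`, the indicator of the singleton `{t}`. -/
noncomputable def deltaVec (t : List ℕ) : lp (fun _ : List ℕ => ℝ) 1 := lp.single 1 t 1

/-- `a_s = ∑_{t ⪯ s} 2^{-|t|} δ_t`. -/
noncomputable def aVec (s : List ℕ) : lp (fun _ : List ℕ => ℝ) 1 :=
  ∑ t ∈ s.inits.toFinset, (2 : ℝ) ^ (-(t.length : ℤ)) • deltaVec t

/-- `b_s = 2^{-|s|} δ_s`. -/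
noncomputable def bVec (s : List ℕ) : lp (fun _ : List ℕ => ℝ) 1 :=
  (2 : ℝ) ^ (-(s.length : ℤ)) • deltaVec s

/-- `W_T`, the closed linear span of `{a_s ⊕ b_s : s ∈ T}` in `ℓ¹ ⊕ ℓ¹`. -/
noncomputable def Wspace (T : Set (List ℕ)) :
    Set ((lp (fun _ : List ℕ => ℝ) 1) × (lp (fun _ : List ℕ => ℝ) 1)) :=
  closure ((Submodule.span ℝ ((fun s => (aVec s, bVec s)) '' T) : Submodule ℝ _) : Set _)

open Function

section ListPrefix

variable {α : Type*}

lemma List.IsPrefix.eq_or_exists_append_singleton_prefix {t s : List α} (h : t <+: s) :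
    t = s ∨ ∃ k, t ++ [k] <+: s := by
  obtain ⟨_ | ⟨k, d⟩, rfl⟩ := h
  · exact .inl (List.append_nil t).symm
  · exact .inr ⟨k, d, by simp⟩

lemma List.eq_of_append_singleton_prefix_of_append_singleton_prefix {t s : List α} {k k' : α}
    (hk : t ++ [k] <+: s) (hk' : t ++ [k'] <+: s) : k = k' := by
  have := (List.prefix_of_prefix_length_le hk hk' (by simp)).eq_of_length (by simp)
  simpa using this

end ListPrefix

section ChildSum

variable {α β E : Type*} [NormedAddCommGroup E]

lemma summable_norm_of_mem_lp_one (f : lp (fun _ : α => E) 1) : Summable fun i => ‖f i‖ := by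
  simpa using f.2.summable (by norm_num)

lemma summable_norm_comp_of_injective (f : lp (fun _ : α => E) 1) {g : β → α}
    (hg : Injective g) : Summable fun k => ‖f (g k)‖ :=
  (summable_norm_of_mem_lp_one f).comp_injective hg

variable [NormedSpace ℝ E] [CompleteSpace E]

noncomputable def tsumCompCLM (g : β → α) (hg : Injective g) :
    lp (fun _ : α => E) 1 →L[ℝ] E :=
  LinearMap.mkContinuous
    { toFun f := ∑' k, f (g k)
      map_add' f f' := by
        simpa using ((summable_norm_comp_of_injective f hg).of_norm).tsum_add
          (summable_norm_comp_of_injective f' hg).of_norm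
      map_smul' c f := by
        simpa using ((summable_norm_comp_of_injective f hg).of_norm).tsum_const_smul c }
    1 fun f => by
      calc ‖∑' k, f (g k)‖ ≤ ∑' k, ‖f (g k)‖ :=
            norm_tsum_le_tsum_norm (summable_norm_comp_of_injective f hg)
        _ ≤ ∑' i, ‖f i‖ := tsum_comp_le_tsum_of_inj (summable_norm_of_mem_lp_one f) (fun _ => norm_nonneg _) hg
        _ = 1 * ‖f‖ := by rw [lp.norm_eq_tsum_rpow (by norm_num)]; simp

@[simp] lemma tsumCompCLM_apply (g : β → α) (hg : Injective g) (f : lp (fun _ : α => E) 1) :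
    tsumCompCLM g hg f = ∑' k, f (g k) := rfl

end ChildSum

lemma ContinuousLinearMap.eq_zero_of_mem_closure_span {𝕜 E F : Type*} [Semiring 𝕜]
    [TopologicalSpace E] [AddCommMonoid E] [Module 𝕜 E] [TopologicalSpace F] [T1Space F]
    [AddCommMonoid F] [Module 𝕜 F] (φ : E →L[𝕜] F) {s : Set E} (hs : ∀ y ∈ s, φ y = 0) {x : E}
    (hx : x ∈ closure (Submodule.span 𝕜 s : Set E)) : φ x = 0 :=
  closure_minimal (Submodule.span_le.2 hs : Submodule.span 𝕜 s ≤ LinearMap.ker (φ : E →ₗ[𝕜] F))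
    (isClosed_singleton.preimage φ.continuous) hx

lemma deltaVec_apply (t s : List ℕ) : deltaVec t s = if s = t then 1 else 0 := by
  simp [deltaVec, Pi.single_apply]

lemma aVec_apply (s t : List ℕ) :
    aVec s t = if t <+: s then (2 : ℝ) ^ (-(t.length : ℤ)) else 0 := by
  rw [aVec, lp.coeFn_sum, Finset.sum_apply]
  simp only [lp.coeFn_smul, Pi.smul_apply, deltaVec_apply, smul_eq_mul, mul_ite, mul_one, mul_zero]
  rw [Finset.sum_ite_eq]
  simp [List.mem_inits]

lemma bVec_apply (s t : List ℕ) :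
    bVec s t = if t = s then (2 : ℝ) ^ (-(s.length : ℤ)) else 0 := by
  simp [bVec, deltaVec_apply]

lemma aVec_apply_eq_bVec_apply_add_two_mul_tsum (s t : List ℕ) :
    aVec s t = bVec s t + 2 * ∑' k : ℕ, aVec s (t ++ [k]) := by
  by_cases hchild : ∃ k, t ++ [k] <+: s
  · obtain ⟨k₀, hk₀⟩ := hchild
    have htsum : ∑' k : ℕ, aVec s (t ++ [k]) = 2 ^ (-(t.length : ℤ) - 1) := by
      rw [tsum_eq_single k₀ fun k hk => ?_, aVec_apply, if_pos hk₀]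
      · push_cast [List.length_append, List.length_singleton]
        ring_nf
      · rw [aVec_apply, if_neg fun h =>
          hk (List.eq_of_append_singleton_prefix_of_append_singleton_prefix h hk₀)]
    have hts : t ≠ s := by
      rintro rfl
      simpa using hk₀.length_le
    rw [aVec_apply, if_pos ((List.prefix_append t [k₀]).trans hk₀), bVec_apply, if_neg hts, htsum,
      zpow_sub₀ two_ne_zero]
    ring
  · push Not at hchild
    have htsum : ∑' k : ℕ, aVec s (t ++ [k]) = 0 := by simp [aVec_apply, hchild]
    rw [htsum, mul_zero, add_zero, aVec_apply, bVec_apply]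
    by_cases hts : t <+: s
    · obtain rfl := hts.eq_or_exists_append_singleton_prefix.resolve_right (not_exists.2 hchild)
      simp
    · rw [if_neg hts, if_neg (by rintro rfl; exact hts (List.prefix_refl t))]

lemma map_eq_zero_of_mem_Wspace {T : Set (List ℕ)}
    (φ : lp (fun _ : List ℕ => ℝ) 1 × lp (fun _ : List ℕ => ℝ) 1 →L[ℝ] ℝ)
    (hφ : ∀ s ∈ T, φ (aVec s, bVec s) = 0) {x} (hx : x ∈ Wspace T) : φ x = 0 :=
  φ.eq_zero_of_mem_closure_span (by rintro _ ⟨s, hs, rfl⟩; exact hφ s hs) hx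

/-- Every `ξ ⊕ η ∈ W_T` vanishes outside `T` and satisfies
`ξ(t) = η(t) + 2 ∑_k ξ(t⌢k)` for all `t`. -/
theorem mem_Wspace_support_and_recursion
    (T : Set (List ℕ)) (hT : ∀ s ∈ T, ∀ t : List ℕ, t <+: s → t ∈ T)
    (x : (lp (fun _ : List ℕ => ℝ) 1) × (lp (fun _ : List ℕ => ℝ) 1))
    (hx : x ∈ Wspace T) :
    (∀ t : List ℕ, t ∉ T → x.1 t = 0 ∧ x.2 t = 0) ∧
    (∀ t : List ℕ, x.1 t = x.2 t + 2 * ∑' k : ℕ, x.1 (t ++ [k])) := by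
  let E := lp (fun _ : List ℕ => ℝ) 1
  let fst (t : List ℕ) : E × E →L[ℝ] ℝ := (lp.evalCLM ℝ _ 1 t).comp (.fst ℝ E E)
  let snd (t : List ℕ) : E × E →L[ℝ] ℝ := (lp.evalCLM ℝ _ 1 t).comp (.snd ℝ E E)
  let childSum (t : List ℕ) : E × E →L[ℝ] ℝ :=
    (tsumCompCLM _ ((List.append_right_injective t).comp List.singleton_injective)).comp
      (.fst ℝ E E)
  refine ⟨fun t ht => ⟨?_, ?_⟩, fun t => ?_⟩
  · refine map_eq_zero_of_mem_Wspace (fst t) (fun s hs => ?_) hx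
    simpa [fst, lp.evalCLM, aVec_apply] using fun h => ht (hT s hs t h)
  · refine map_eq_zero_of_mem_Wspace (snd t) (fun s hs => ?_) hx
    simpa [snd, lp.evalCLM, bVec_apply] using fun h : t = s => ht (h ▸ hs)
  · have := map_eq_zero_of_mem_Wspace (fst t - snd t - (2 : ℝ) • childSum t) (fun s _ => ?_) hx
    · simpa [fst, snd, childSum, lp.evalCLM, sub_eq_zero, sub_sub] using this
    · simp [fst, snd, childSum, lp.evalCLM, aVec_apply_eq_bVec_apply_add_two_mul_tsum s t]
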